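/- Let d ≠ 1 be a squarefree integer not divisible by 5, let ζ₅ = exp(2πi/5) ∈ ℂ, fix s ∈ ℂ with s² = d, and let M = ℚ((ζ₅ − ζ₅⁻¹)·s) be the subfield of ℂ generated over ℚ by α = (ζ₅ − ζ₅⁻¹)·s. Then M is a cyclic quartic field: [M : ℚ] = 4, the extension M/ℚ is Galois, and the Galois group Gal(M/ℚ) is cyclic of order 4. -/

import Mathlib

/-!
With `t = (ζ - ζ⁻¹)²` one has `t² + 5t + 5 = 0`, so `α = (ζ - ζ⁻¹)s` is a root of
`X⁴ + 5dX² + 5d²`, which is Eisenstein at `5` because `5 ∤ d`. Its roots are `±α, ±β` with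
`β = -(2α² + 5d)/α ∈ ℚ(α)`, so `ℚ(α)/ℚ` is Galois of degree `4`. The automorphism with `α ↦ β`
commutes with the rational map `x ↦ -(2x² + 5d)/x`, hence sends `β ↦ -α` and has order `4`.
-/

open Polynomial IntermediateField

noncomputable def quarticPoly {R : Type*} [CommRing R] (d : R) : R[X] :=
  X ^ 4 + C (5 * d) * X ^ 2 + C (5 * d ^ 2)

section quarticPoly

variable {R : Type*} [CommRing R] (d : R)

theorem quarticPoly_monic : (quarticPoly d).Monic := by
  unfold quarticPoly; monicity!

theorem natDegree_quarticPoly [Nontrivial R] : (quarticPoly d).natDegree = 4 := by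
  unfold quarticPoly; compute_degree!

theorem map_quarticPoly {S : Type*} [CommRing S] (f : R →+* S) :
    (quarticPoly d).map f = quarticPoly (f d) := by
  simp [quarticPoly, map_ofNat]

theorem aeval_quarticPoly {A : Type*} [CommRing A] [Algebra R A] (x : A) :
    aeval x (quarticPoly d) =
      x ^ 4 + 5 * algebraMap R A d * x ^ 2 + 5 * algebraMap R A d ^ 2 := by
  simp [quarticPoly, map_ofNat]

end quarticPoly

theorem isEisensteinAt_quarticPoly {d : ℤ} (hd : ¬ 5 ∣ d) :
    (quarticPoly d).IsEisensteinAt (Ideal.span {5}) := by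
  refine ⟨?_, fun {n} hn ↦ ?_, ?_⟩
  · rw [(quarticPoly_monic d).leadingCoeff, Ideal.mem_span_singleton]
    norm_num
  · rw [natDegree_quarticPoly] at hn
    rw [Ideal.mem_span_singleton]
    interval_cases n <;>
      simp only [quarticPoly, coeff_add, coeff_C_mul, coeff_X_pow, coeff_C] <;> norm_num
  · rw [Ideal.span_singleton_pow, Ideal.mem_span_singleton]
    simp only [quarticPoly, coeff_add, coeff_C_mul, coeff_X_pow, coeff_C]
    norm_num
    rw [show (25 : ℤ) = 5 * 5 by norm_num, mul_dvd_mul_iff_left (by norm_num)]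
    exact fun h ↦ hd ((by norm_num : Prime (5 : ℤ)).dvd_of_dvd_pow h)

theorem irreducible_quarticPoly {d : ℤ} (hd : ¬ 5 ∣ d) : Irreducible (quarticPoly (d : ℚ)) := by
  have hprim := (quarticPoly_monic d).isPrimitive
  have hirr : Irreducible (quarticPoly d) :=
    (isEisensteinAt_quarticPoly hd).irreducible
      ((Ideal.span_singleton_prime (by norm_num)).mpr (by norm_num)) hprim
      (by rw [natDegree_quarticPoly]; norm_num)
  simpa [map_quarticPoly] using
    (IsPrimitive.Int.irreducible_iff_irreducible_map_cast hprim).mp hirr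

theorem IsPrimitiveRoot.quartic_sub_inv_mul_eq_zero {K : Type*} [Field K] {ζ s e : K}
    (hζ : IsPrimitiveRoot ζ 5) (hs : s ^ 2 = e) :
    ((ζ - ζ⁻¹) * s) ^ 4 + 5 * e * ((ζ - ζ⁻¹) * s) ^ 2 + 5 * e ^ 2 = 0 := by
  have h5 : ζ ^ 5 = 1 := hζ.pow_eq_one
  have hsum : 1 + ζ + ζ ^ 2 + ζ ^ 3 + ζ ^ 4 = 0 := by
    simpa [Finset.sum_range_succ, add_assoc] using hζ.geom_sum_eq_zero (by norm_num)
  have hinv : ζ⁻¹ = ζ ^ 4 := (eq_inv_of_mul_eq_one_left (by rw [← pow_succ, h5])).symm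
  have hsq : (ζ - ζ⁻¹) ^ 2 = ζ ^ 2 + ζ ^ 3 - 2 := by
    rw [hinv]
    linear_combination (ζ ^ 3 - 2) * h5
  have hquad : (ζ - ζ⁻¹) ^ 4 + 5 * (ζ - ζ⁻¹) ^ 2 + 5 = 0 := by
    linear_combination ((ζ - ζ⁻¹) ^ 2 + ζ ^ 2 + ζ ^ 3 + 3) * hsq + hsum + (ζ + 2) * h5
  linear_combination e ^ 2 * hquad + ((ζ - ζ⁻¹) ^ 4 * (s ^ 2 + e) + 5 * e * (ζ - ζ⁻¹) ^ 2) * hs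

section quarticConj

variable {K : Type*} [Field K]

/-- For a root `a` of `X⁴ + 5eX² + 5e²`, `b = quarticConj e a` satisfies `a²b² = 5e²`, so `a²` and
`b²` are the two roots of `Y² + 5eY + 5e²`. -/
def quarticConj (e a : K) : K := -(2 * a ^ 2 + 5 * e) / a

theorem map_quarticConj {L G : Type*} [Field L] [FunLike G K L] [RingHomClass G K L] (f : G)
    (e a : K) :
    f (quarticConj e a) = quarticConj (f e) (f a) := by
  simp [quarticConj, map_ofNat]

theorem sq_add_sq_quarticConj {e a : K} (ha : a ^ 4 + 5 * e * a ^ 2 + 5 * e ^ 2 = 0)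
    (ha0 : a ≠ 0) :
    a ^ 2 + quarticConj e a ^ 2 = -(5 * e) := by
  unfold quarticConj
  field_simp
  linear_combination 5 * ha

theorem sq_mul_sq_quarticConj {e a : K} (ha : a ^ 4 + 5 * e * a ^ 2 + 5 * e ^ 2 = 0)
    (ha0 : a ≠ 0) :
    a ^ 2 * quarticConj e a ^ 2 = 5 * e ^ 2 := by
  unfold quarticConj
  field_simp
  linear_combination 4 * ha

theorem mul_quarticConj (e : K) {a : K} (ha0 : a ≠ 0) :
    a * quarticConj e a = -(2 * a ^ 2 + 5 * e) := by
  rw [quarticConj, mul_div_cancel₀ _ ha0]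

theorem quarticConj_quarticConj {e a : K} (ha : a ^ 4 + 5 * e * a ^ 2 + 5 * e ^ 2 = 0)
    (ha0 : a ≠ 0) :
    quarticConj e (quarticConj e a) = -a := by
  have hsum := sq_add_sq_quarticConj ha ha0
  have hmul := mul_quarticConj e ha0
  have hb0 : quarticConj e a ≠ 0 := by
    intro hb
    rw [hb] at hsum hmul
    exact ha0 (pow_eq_zero_iff two_ne_zero |>.mp (by linear_combination hmul - hsum))
  rw [quarticConj, div_eq_iff hb0]
  linear_combination -2 * hsum + hmul

theorem quarticPoly_eq_mul {e a : K} (ha : a ^ 4 + 5 * e * a ^ 2 + 5 * e ^ 2 = 0)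
    (ha0 : a ≠ 0) :
    quarticPoly e =
      (X - C a) * (X + C a) * (X - C (quarticConj e a)) * (X + C (quarticConj e a)) := by
  have hsum := sq_add_sq_quarticConj ha ha0
  have hprod := sq_mul_sq_quarticConj ha ha0
  calc quarticPoly e = X ^ 4 - C (a ^ 2 + quarticConj e a ^ 2) * X ^ 2
        + C (a ^ 2 * quarticConj e a ^ 2) := by
        rw [hsum, hprod, quarticPoly, C_neg]; ring
    _ = _ := by simp only [map_add, map_mul, map_pow]; ring

end quarticConj

theorem isCyclic_of_card_eq_four_of_sq_ne_one {G : Type*} [Group G] [Finite G]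
    (hG : Nat.card G = 4) {g : G} (hg : g ^ 2 ≠ 1) : IsCyclic G := by
  have hg4 : g ^ 2 ^ 2 = 1 := by rw [show 2 ^ 2 = Nat.card G by omega]; exact pow_card_eq_one'
  exact isCyclic_of_orderOf_eq_card g <| by
    rw [orderOf_eq_prime_pow (p := 2) (n := 1) (by simpa using hg) hg4, hG]; rfl

theorem isGalois_adjoin_simple_of_splits {F E : Type*} [Field F] [Field E] [Algebra F E]
    {α : E} (hα : IsIntegral F α) (hsep : IsSeparable F α)
    (hsplits : ((minpoly F α).map (algebraMap F F⟮α⟯)).Splits) : IsGalois F F⟮α⟯ := by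
  have := adjoin.finiteDimensional hα
  refine IsGalois.of_card_aut_eq_finrank F F⟮α⟯ ?_
  rw [adjoin.finrank hα, ← card_algHom_adjoin_integral F (K := F⟮α⟯) hα hsep hsplits]
  exact Nat.card_congr (algEquivEquivAlgHom F F⟮α⟯)

section minpoly

variable {F K : Type*} [Field F] [Field K] [Algebra F K] {d : F} {a : K}

theorem quartic_eq_zero_of_minpoly_eq_quarticPoly (hmin : minpoly F a = quarticPoly d) :
    a ^ 4 + 5 * algebraMap F K d * a ^ 2 + 5 * algebraMap F K d ^ 2 = 0 := by
  rw [← aeval_quarticPoly, ← hmin]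
  exact minpoly.aeval F a

theorem ne_zero_of_minpoly_eq_quarticPoly (hmin : minpoly F a = quarticPoly d) : a ≠ 0 := by
  rintro rfl
  have := congrArg natDegree hmin
  rw [minpoly.zero, natDegree_X, natDegree_quarticPoly] at this
  omega

theorem map_quarticPoly_eq_mul_of_minpoly_eq (hmin : minpoly F a = quarticPoly d) :
    (quarticPoly d).map (algebraMap F K) = (X - C a) * (X + C a) *
      (X - C (quarticConj (algebraMap F K d) a)) * (X + C (quarticConj (algebraMap F K d) a)) := by
  rw [map_quarticPoly, quarticPoly_eq_mul (quartic_eq_zero_of_minpoly_eq_quarticPoly hmin)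
    (ne_zero_of_minpoly_eq_quarticPoly hmin)]

theorem exists_sq_ne_one_of_minpoly_eq_quarticPoly [CharZero F] [Normal F K]
    (hmin : minpoly F a = quarticPoly d) : ∃ σ : Gal(K/F), σ ^ 2 ≠ 1 := by
  set b := quarticConj (algebraMap F K d) a
  have ha := quartic_eq_zero_of_minpoly_eq_quarticPoly hmin
  have ha0 := ne_zero_of_minpoly_eq_quarticPoly hmin
  have hb : aeval b (quarticPoly d) = 0 := by
    rw [aeval_def, eval₂_eq_eval_map, map_quarticPoly_eq_mul_of_minpoly_eq hmin]
    simp [b]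
  have hminb : minpoly F b = minpoly F a := by
    rw [hmin]
    refine (minpoly.eq_of_irreducible_of_monic ?_ hb (quarticPoly_monic d)).symm
    exact hmin ▸ minpoly.irreducible (Algebra.IsIntegral.isIntegral a)
  obtain ⟨σ, hσa⟩ : ∃ σ : Gal(K/F), σ a = b := (Normal.minpoly_eq_iff_mem_orbit K).mp hminb
  have hσσa : σ (σ a) = -a := by
    rw [hσa, map_quarticConj, AlgEquiv.commutes, hσa, quarticConj_quarticConj ha ha0]
  have h2 : (2 : K) ≠ 0 := by
    rw [← map_ofNat (algebraMap F K) 2]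
    exact (_root_.map_ne_zero _).mpr two_ne_zero
  refine ⟨σ, fun h ↦ ha0 ?_⟩
  have hneg : -a = a := by rw [← hσσa, ← AlgEquiv.mul_apply, ← pow_two, h, AlgEquiv.one_apply]
  exact (mul_eq_zero.mp (by linear_combination -hneg : 2 * a = 0)).resolve_left h2

end minpoly

theorem finrank_isGalois_isCyclic_adjoin_root_quarticPoly {F E : Type*} [Field F] [CharZero F]
    [Field E] [Algebra F E] {d : F} (hirr : Irreducible (quarticPoly d)) {α : E}
    (hα : aeval α (quarticPoly d) = 0) :
    Module.finrank F F⟮α⟯ = 4 ∧ IsGalois F F⟮α⟯ ∧ IsCyclic Gal(F⟮α⟯/F) := by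
  have hmin : minpoly F α = quarticPoly d :=
    (minpoly.eq_of_irreducible_of_monic hirr hα (quarticPoly_monic d)).symm
  have hint : IsIntegral F α := ⟨_, quarticPoly_monic d, hα⟩
  have hfinrank : Module.finrank F F⟮α⟯ = 4 := by
    rw [adjoin.finrank hint, hmin, natDegree_quarticPoly]
  have hmin_gen : minpoly F (AdjoinSimple.gen F α) = quarticPoly d := by
    rw [minpoly_gen, hmin]
  have hsplits : ((minpoly F α).map (algebraMap F F⟮α⟯)).Splits := by
    rw [hmin, map_quarticPoly_eq_mul_of_minpoly_eq hmin_gen]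
    exact (((Splits.X_sub_C _).mul (Splits.X_add_C _)).mul (Splits.X_sub_C _)).mul
      (Splits.X_add_C _)
  have hsep : IsSeparable F α := by rw [IsSeparable, hmin]; exact hirr.separable
  have hgal := isGalois_adjoin_simple_of_splits hint hsep hsplits
  obtain ⟨σ, hσ⟩ := exists_sq_ne_one_of_minpoly_eq_quarticPoly hmin_gen
  have := adjoin.finiteDimensional hint
  exact ⟨hfinrank, hgal,
    isCyclic_of_card_eq_four_of_sq_ne_one (by rw [IsGalois.card_aut_eq_finrank, hfinrank]) hσ⟩

theorem stmt_9_general (d : ℤ) (hd5 : ¬ (5 : ℤ) ∣ d)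
    (s : ℂ) (hs : s ^ 2 = (d : ℂ))
    (ζ : ℂ) (hζ : ζ = Complex.exp (2 * Real.pi * Complex.I / 5))
    (M : IntermediateField ℚ ℂ)
    (hM : M = IntermediateField.adjoin ℚ {(ζ - ζ⁻¹) * s}) :
    Module.finrank ℚ M = 4 ∧ IsGalois ℚ M ∧ IsCyclic (M ≃ₐ[ℚ] M) := by
  have hζ5 : IsPrimitiveRoot ζ 5 := hζ ▸ Complex.isPrimitiveRoot_exp 5 (by norm_num)
  subst hM
  refine finrank_isGalois_isCyclic_adjoin_root_quarticPoly (irreducible_quarticPoly hd5) ?_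
  rw [aeval_quarticPoly, map_intCast]
  exact hζ5.quartic_sub_inv_mul_eq_zero hs

/-- For a squarefree integer `d ≠ 1` prime to `5`,
`ζ₅ = exp(2πi/5)`, and `s` a complex square root of `d`, the field
`M = ℚ((ζ₅ - ζ₅⁻¹)·s)` is a cyclic quartic field: `[M : ℚ] = 4`, `M/ℚ` is Galois,
and `Gal(M/ℚ)` is cyclic (of order 4). -/
theorem stmt_9 (d : ℤ) (hd1 : d ≠ 1) (hsf : Squarefree d) (hd5 : ¬ (5 : ℤ) ∣ d)
    (s : ℂ) (hs : s ^ 2 = (d : ℂ))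
    (ζ : ℂ) (hζ : ζ = Complex.exp (2 * Real.pi * Complex.I / 5))
    (M : IntermediateField ℚ ℂ)
    (hM : M = IntermediateField.adjoin ℚ {(ζ - ζ⁻¹) * s}) :
    Module.finrank ℚ M = 4 ∧ IsGalois ℚ M ∧ IsCyclic (M ≃ₐ[ℚ] M) :=
  stmt_9_general d hd5 s hs ζ hζ M hM
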